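/- arXiv:2605.29991 — 2 statements merged into one kernel-verified Lean document; each statement's English description precedes it below -/
import Mathlib

section
/- Let n = 2m+1 and q ≠ 0, |q| arbitrary nonzero. Define Θ_n(q,x) = Σ_{j=0}^n q^{j(j+1)/2} x^j and Ψ_m(q) = Σ_{k=0}^m (−1)^k (2k+1) q^{k(k+1)/2}. If Ψ_m(q) = 0, then x = −q^{−(m+1)} is a multiple zero of Θ_{2m+1}(q, ·), i.e. Θ_{2m+1}(q, −q^{−(m+1)}) = 0 and ∂_x Θ_{2m+1}(q, −q^{−(m+1)}) = 0. -/
open Finset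

/-!
At `x₀ = -q^{-(m+1)}` the `j`-th term of `Θ_{2m+1}(q, x₀)` is `(-1)^j q^{j(j-2m-1)/2}`, and the exponent
is invariant under `j ↦ 2m+1-j` while the sign flips. Pairing `j = m-k` with `j = m+1+k`, both terms
become `± q^{k(k+1)/2 - m(m+1)/2}`, so the value cancels, while `x₀ Θ'(x₀) = Σ j (-1)^j q^{j(j-2m-1)/2}`
collapses to `(-1)^{m+1} q^{-m(m+1)/2} Ψ_m(q)`.
-/

theorem Finset.sum_range_two_mul_eq_sum_reflect_add {M : Type*} [AddCommMonoid M]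
    (f : ℕ → M) (n : ℕ) :
    ∑ j ∈ range (2 * n), f j = ∑ k ∈ range n, (f (n - 1 - k) + f (n + k)) := by
  rw [two_mul, sum_range_add, sum_add_distrib, sum_range_reflect f n]

theorem Nat.triangle_add_triangle_eq {j k m : ℕ} (h : (j : ℤ) = m - k ∨ (j : ℤ) = m + 1 + k) :
    j * (j + 1) / 2 + m * (m + 1) / 2 = k * (k + 1) / 2 + (m + 1) * j := by
  have two_mul_div (n : ℕ) : 2 * (n * (n + 1) / 2) = n * (n + 1) :=
    Nat.mul_div_cancel' (Nat.even_mul_succ_self n).two_dvd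
  apply Nat.eq_of_mul_eq_mul_left two_pos
  rw [Nat.mul_add 2, Nat.mul_add 2, two_mul_div, two_mul_div, two_mul_div]
  zify
  rcases h with h | h <;> rw [h] <;> ring

section
variable {K : Type*} [Field K] {q : K}

theorem pow_triangle_mul_pow_eq (hq : q ≠ 0) {j k m : ℕ}
    (h : (j : ℤ) = m - k ∨ (j : ℤ) = m + 1 + k) :
    q ^ (j * (j + 1) / 2) * (-q ^ (-(m + 1 : ℤ))) ^ j * q ^ (m * (m + 1) / 2)
      = (-1) ^ j * q ^ (k * (k + 1) / 2) := by
  have hx : (-q ^ (-(m + 1 : ℤ))) ^ j * q ^ ((m + 1) * j) = (-1) ^ j := by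
    have hinv : q ^ (-(m + 1 : ℤ)) = (q ^ (m + 1))⁻¹ := by rw [zpow_neg]; norm_cast
    rw [hinv, pow_mul, ← mul_pow, neg_mul, inv_mul_cancel₀ (pow_ne_zero _ hq)]
  calc _ = (-q ^ (-(m + 1 : ℤ))) ^ j * q ^ (j * (j + 1) / 2 + m * (m + 1) / 2) := by ring
    _ = (-q ^ (-(m + 1 : ℤ))) ^ j * q ^ ((m + 1) * j) * q ^ (k * (k + 1) / 2) := by
      rw [Nat.triangle_add_triangle_eq h]; ring
    _ = _ := by rw [hx]

theorem neg_one_pow_sub_eq_neg {m k : ℕ} (hk : k ≤ m) :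
    (-1 : K) ^ (m - k) = -(-1) ^ (m + 1 + k) := by
  rw [show m + 1 + k = m - k + (2 * k + 1) by omega, pow_add,
    (odd_two_mul_add_one k).neg_one_pow]
  ring

theorem sum_weighted_theta_terms_mul_pow_triangle (hq : q ≠ 0) (m : ℕ) (w : ℕ → K) :
    (∑ j ∈ range (2 * m + 2), w j * (q ^ (j * (j + 1) / 2) * (-q ^ (-(m + 1 : ℤ))) ^ j))
        * q ^ (m * (m + 1) / 2)
      = ∑ k ∈ range (m + 1),
          (-1) ^ (m + 1 + k) * (w (m + 1 + k) - w (m - k)) * q ^ (k * (k + 1) / 2) := by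
  rw [show 2 * m + 2 = 2 * (m + 1) by ring, sum_range_two_mul_eq_sum_reflect_add, sum_mul]
  refine sum_congr rfl fun k hk => ?_
  have hk : k ≤ m := Nat.lt_succ_iff.mp (mem_range.mp hk)
  have low := pow_triangle_mul_pow_eq hq (j := m - k) (k := k) (m := m) (by omega)
  have high := pow_triangle_mul_pow_eq hq (j := m + 1 + k) (k := k) (m := m)
    (.inr (by push_cast; ring))
  rw [Nat.add_sub_cancel]
  linear_combination w (m - k) * low + w (m + 1 + k) * high
    + w (m - k) * q ^ (k * (k + 1) / 2) * neg_one_pow_sub_eq_neg (K := K) hk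

theorem mul_deriv_sum_pow {𝕜 : Type*} [NontriviallyNormedField 𝕜] (s : Finset ℕ) (c : ℕ → 𝕜)
    (x : 𝕜) :
    x * deriv (fun y => ∑ j ∈ s, c j * y ^ j) x = ∑ j ∈ s, (j : 𝕜) * (c j * x ^ j) := by
  rw [deriv_fun_sum fun j _ => (differentiableAt_pow j).const_mul _, mul_sum]
  refine sum_congr rfl fun j _ => ?_
  rw [deriv_const_mul _ (differentiableAt_pow j), deriv_pow_field]
  rcases j with _ | j
  · simp
  · rw [Nat.add_sub_cancel]; ring

theorem sum_neg_one_pow_mul_cast_sub_eq (m : ℕ) (q : K) :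
    ∑ k ∈ range (m + 1), (-1) ^ (m + 1 + k) * (((m + 1 + k : ℕ) : K) - ((m - k : ℕ) : K))
        * q ^ (k * (k + 1) / 2)
      = (-1) ^ (m + 1) *
          ∑ k ∈ range (m + 1), (-1 : K) ^ k * (2 * k + 1) * q ^ (k * (k + 1) / 2) := by
  rw [mul_sum]
  refine sum_congr rfl fun k hk => ?_
  rw [Nat.cast_sub (Nat.lt_succ_iff.mp (mem_range.mp hk)), pow_add]
  push_cast
  ring

end

/-- central spectral factor for odd truncations: if
`Ψ_m(q) = Σ_{k=0}^m (−1)^k (2k+1) q^{k(k+1)/2} = 0` and `q ≠ 0`, then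
`x = −q^{−(m+1)}` is a multiple zero of the truncation
`Θ_{2m+1}(q,x) = Σ_{j=0}^{2m+1} q^{j(j+1)/2} x^j`. -/
theorem central_spectral_factor (m : ℕ) (q : ℂ) (hq : q ≠ 0)
    (hPsi : ∑ k ∈ range (m + 1), (-1 : ℂ) ^ k * (2 * k + 1) * q ^ (k * (k + 1) / 2) = 0) :
    (∑ j ∈ range (2 * m + 2), q ^ (j * (j + 1) / 2) * (-q ^ (-(m + 1 : ℤ))) ^ j = 0) ∧
    deriv (fun x : ℂ => ∑ j ∈ range (2 * m + 2), q ^ (j * (j + 1) / 2) * x ^ j)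
      (-q ^ (-(m + 1 : ℤ))) = 0 := by
  have hx₀ : -q ^ (-(m + 1 : ℤ)) ≠ 0 := neg_ne_zero.mpr (zpow_ne_zero _ hq)
  have hqm : q ^ (m * (m + 1) / 2) ≠ 0 := pow_ne_zero _ hq
  constructor
  · have h := sum_weighted_theta_terms_mul_pow_triangle hq m fun _ => 1
    simp only [one_mul, sub_self, mul_zero, zero_mul, sum_const_zero] at h
    exact (mul_eq_zero.mp h).resolve_right hqm
  · have h := sum_weighted_theta_terms_mul_pow_triangle hq m Nat.cast
    rw [← mul_deriv_sum_pow, sum_neg_one_pow_mul_cast_sub_eq, hPsi, mul_zero,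
      mul_eq_zero, mul_eq_zero] at h
    exact (h.resolve_right hqm).resolve_left hx₀
end

section
/- Let q ≠ 0 with |q| < 1, N ≥ 1, and set x = −q^{−N} e^u. Then Θ(q,x) = 0 and ∂_x Θ(q,x) = 0 hold simultaneously if and only if H_N(q,u) = 0 and ∂_u H_N(q,u) = 0 hold simultaneously, where H_N(q,u) = Σ_{s=−N}^∞ (−1)^s q^{s(s+1)/2} e^{su}. -/
/-- The partial theta function `Θ(q,x) = Σ_{j≥0} q^{j(j+1)/2} x^j`. -/
noncomputable def partialTheta (q x : ℂ) : ℂ :=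
  ∑' j : ℕ, q ^ (j * (j + 1) / 2) * x ^ j

/-- The moving-window series `H_N(q,u) = Σ_{s=−N}^∞ (−1)^s q^{s(s+1)/2} e^{su}`,
parametrized by `s = t − N`, `t ∈ ℕ`. -/
noncomputable def movingWindowH (N : ℕ) (q u : ℂ) : ℂ :=
  ∑' t : ℕ, (-1 : ℂ) ^ ((t : ℤ) - N) *
    q ^ ((((t : ℤ) - N) * (((t : ℤ) - N) + 1)) / 2) *
    Complex.exp (((t : ℤ) - N) * u)

/-!
Substituting `s = j - N` gives
`H_N(q,u) = (-1)^N q^{N(N-1)/2} e^{-Nu} Θ(q, -q^{-N} e^u)`, so `H_N(q,·)` is `Θ(q,·)`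
precomposed with `u ↦ -q^{-N} e^u`, whose derivative `x` never vanishes, and multiplied by a
nowhere vanishing factor. Both operations preserve double zeros of `Θ(q,·)`, which is entire for
`0 < |q| < 1` by the ratio test: consecutive coefficients have ratio `q^{n+1}`.
-/

open Filter FormalMultilinearSeries

lemma partialTheta_eq_ofScalarsSum (q : ℂ) :
    partialTheta q = ofScalarsSum fun n : ℕ => q ^ (n * (n + 1) / 2) := by
  rw [ofScalarsSum_eq_tsum]
  rfl

lemma radius_ofScalars_partialTheta {q : ℂ} (hq0 : q ≠ 0) (hq : ‖q‖ < 1) :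
    (ofScalars ℂ fun n : ℕ => q ^ (n * (n + 1) / 2)).radius = ⊤ := by
  refine ofScalars_radius_eq_top_of_tendsto ℂ _
    (Eventually.of_forall fun n => pow_ne_zero _ hq0) ?_
  have hratio : ∀ n : ℕ, ‖q‖ ^ (n + 1) =
      ‖q ^ ((n + 1) * (n + 1 + 1) / 2)‖ / ‖q ^ (n * (n + 1) / 2)‖ := by
    intro n
    have htriangle : (n + 1) * (n + 1 + 1) / 2 = n * (n + 1) / 2 + (n + 1) := by
      simpa [Nat.mul_comm] using Nat.triangle_succ (n + 1)
    rw [htriangle, norm_pow, norm_pow, pow_add ‖q‖ (n * (n + 1) / 2),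
      mul_div_cancel_left₀ _ (pow_ne_zero _ (norm_ne_zero_iff.mpr hq0))]
  exact ((tendsto_pow_atTop_nhds_zero_of_lt_one (norm_nonneg q) hq).comp
    (tendsto_add_atTop_nat 1)).congr hratio

theorem differentiable_partialTheta {q : ℂ} (hq0 : q ≠ 0) (hq : ‖q‖ < 1) :
    Differentiable ℂ (partialTheta q) := by
  have hr := radius_ofScalars_partialTheta hq0 hq
  have h := (ofScalars ℂ fun n : ℕ => q ^ (n * (n + 1) / 2)).hasFPowerSeriesOnBall
    (hr ▸ ENNReal.zero_lt_top)
  rw [hr] at h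
  rw [partialTheta_eq_ofScalarsSum, ← differentiableOn_univ, ← Metric.eball_top_eq_univ 0]
  exact h.differentiableOn

lemma Int.sub_mul_sub_add_one_div_two (t n : ℤ) :
    (t - n) * (t - n + 1) / 2 = t * (t + 1) / 2 - n * t + n * (n - 1) / 2 := by
  obtain ⟨a, ha⟩ := Int.even_mul_succ_self t
  obtain ⟨b, hb⟩ := Int.even_mul_pred_self n
  have hshift : (t - n) * (t - n + 1) = 2 * (a - n * t + b) := by linear_combination ha + hb
  rw [hshift, ha, hb, ← two_mul, ← two_mul]
  simp only [Int.mul_ediv_cancel_left _ two_ne_zero]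

lemma movingWindowH_term_eq {q : ℂ} (hq0 : q ≠ 0) (N t : ℕ) (v : ℂ) :
    (-1 : ℂ) ^ ((t : ℤ) - N) * q ^ ((((t : ℤ) - N) * (((t : ℤ) - N) + 1)) / 2) *
        Complex.exp (((t : ℤ) - N) * v) =
      (-1 : ℂ) ^ N * q ^ ((N : ℤ) * ((N : ℤ) - 1) / 2) * Complex.exp (-N * v) *
        (q ^ (t * (t + 1) / 2) * (-q ^ (-(N : ℤ)) * Complex.exp v) ^ t) := by
  have hsign : (-1 : ℂ) ^ ((t : ℤ) - N) = (-1) ^ N * (-1) ^ t := by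
    rw [zpow_sub₀ (by norm_num), zpow_natCast, zpow_natCast, div_eq_iff (by simp), mul_right_comm,
      ← mul_pow]
    simp
  have hq : q ^ ((((t : ℤ) - N) * (((t : ℤ) - N) + 1)) / 2) =
      q ^ ((N : ℤ) * ((N : ℤ) - 1) / 2) * q ^ (t * (t + 1) / 2) * (q ^ (-(N : ℤ))) ^ t := by
    rw [Int.sub_mul_sub_add_one_div_two, sub_eq_add_neg, zpow_add₀ hq0, zpow_add₀ hq0,
      ← zpow_natCast, ← zpow_natCast, ← zpow_mul, neg_mul_eq_neg_mul]
    push_cast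
    ring
  have hexp : Complex.exp (((t : ℤ) - N) * v) = Complex.exp (-N * v) * Complex.exp v ^ t := by
    rw [← Complex.exp_nat_mul, ← Complex.exp_add]
    push_cast
    ring_nf
  rw [hsign, hq, hexp, mul_pow, neg_pow]
  ring

theorem movingWindowH_eq {q : ℂ} (hq0 : q ≠ 0) (N : ℕ) (v : ℂ) :
    movingWindowH N q v =
      (-1 : ℂ) ^ N * q ^ ((N : ℤ) * ((N : ℤ) - 1) / 2) * Complex.exp (-N * v) *
        partialTheta q (-q ^ (-(N : ℤ)) * Complex.exp v) := by
  rw [movingWindowH, partialTheta, ← tsum_mul_left]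
  exact tsum_congr (movingWindowH_term_eq hq0 N · v)

theorem doubleRoot_iff_doubleRoot_mul_comp {𝕜 : Type*} [NontriviallyNormedField 𝕜]
    {f a φ : 𝕜 → 𝕜} {u φ' : 𝕜} (hf : DifferentiableAt 𝕜 f (φ u))
    (ha : DifferentiableAt 𝕜 a u) (hφ : HasDerivAt φ φ' u) (ha0 : a u ≠ 0) (hφ' : φ' ≠ 0) :
    (f (φ u) = 0 ∧ deriv f (φ u) = 0) ↔
      (a u * f (φ u) = 0 ∧ deriv (fun v => a v * f (φ v)) u = 0) := by
  have hderiv : deriv (fun v => a v * f (φ v)) u =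
      deriv a u * f (φ u) + a u * (deriv f (φ u) * φ') :=
    (ha.hasDerivAt.mul (hf.hasDerivAt.comp u hφ)).deriv
  rw [hderiv]
  constructor
  · rintro ⟨hf0, hf'0⟩
    simp [hf0, hf'0]
  · rintro ⟨h0, h1⟩
    have hf0 : f (φ u) = 0 := (mul_eq_zero.mp h0).resolve_left ha0
    exact ⟨hf0, by simpa [hf0, ha0, hφ'] using h1⟩

theorem moving_window_double_roots_general (q : ℂ) (hq0 : q ≠ 0) (hq : ‖q‖ < 1)
    (N : ℕ) (u x : ℂ)
    (hx : x = -q ^ (-(N : ℤ)) * Complex.exp u) :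
    (partialTheta q x = 0 ∧ deriv (partialTheta q) x = 0) ↔
    (movingWindowH N q u = 0 ∧ deriv (movingWindowH N q) u = 0) := by
  have hφ : HasDerivAt (fun v => -q ^ (-(N : ℤ)) * Complex.exp v) x u := by
    simpa [hx] using (Complex.hasDerivAt_exp u).const_mul (-q ^ (-(N : ℤ)))
  rw [funext (movingWindowH_eq hq0 N), hx]
  beta_reduce
  apply doubleRoot_iff_doubleRoot_mul_comp (differentiable_partialTheta hq0 hq _) (by fun_prop)
    hφ (by simp [zpow_ne_zero _ hq0]) (by simp [hx, hq0])

/-- double roots in the moving window: with `x = −q^{−N} e^u`,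
`Θ(q,x) = ∂_x Θ(q,x) = 0` if and only if `H_N(q,u) = ∂_u H_N(q,u) = 0`. -/
theorem moving_window_double_roots (q : ℂ) (hq0 : q ≠ 0) (hq : ‖q‖ < 1)
    (N : ℕ) (hN : 1 ≤ N) (u x : ℂ)
    (hx : x = -q ^ (-(N : ℤ)) * Complex.exp u) :
    (partialTheta q x = 0 ∧ deriv (partialTheta q) x = 0) ↔
    (movingWindowH N q u = 0 ∧ deriv (movingWindowH N q) u = 0) :=
  moving_window_double_roots_general q hq0 hq N u x hx
end
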